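/- arXiv:1309.4821 — 5 statements merged into one kernel-verified Lean document; each statement's English description precedes it below -/
import Mathlib

section
/- For every Monadic Equational System S = (V, C, T, E) that admits free algebras, the induced free S-algebra monad T_S on C is a strong monad, with strength uniquely determined by compatibility with the strength of T via the free-algebra structure maps. -/
open CategoryTheory MonoidalCategory Limits

universe w v₁ v₂ v₃ u₁ u₂ u₃

namespace MonEq

variable (V : Type u₁) [Category.{v₁} V] [MonoidalCategory V]
variable (C : Type u₂) [Category.{v₂} C]

/-- An action of a monoidal category `V` on a category `C`, with coherence
isomorphisms `lam : I ⊳ c ≅ c` and `assoc : (u ⊗ v) ⊳ c ≅ u ⊳ (v ⊳ c)`. -/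
structure MonAction where
  act : V ⥤ C ⥤ C
  lam : act.obj (𝟙_ V) ≅ 𝟭 C
  assoc : ∀ u v : V, act.obj (u ⊗ v) ≅ act.obj v ⋙ act.obj u
  assoc_natural :
    ∀ {u u' v v' : V} (f : u ⟶ u') (g : v ⟶ v') (c : C),
      (act.map (f ⊗ₘ g)).app c ≫ (assoc u' v').hom.app c =
        (assoc u v).hom.app c ≫ (act.map f).app ((act.obj v).obj c) ≫
          (act.obj u').map ((act.map g).app c)
  triangle_left :
    ∀ (v : V) (c : C),
      (assoc (𝟙_ V) v).hom.app c ≫ lam.hom.app ((act.obj v).obj c) =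
        (act.map (λ_ v).hom).app c
  triangle_right :
    ∀ (v : V) (c : C),
      (assoc v (𝟙_ V)).hom.app c ≫ (act.obj v).map (lam.hom.app c) =
        (act.map (ρ_ v).hom).app c
  pentagon :
    ∀ (u v w : V) (c : C),
      (act.map (α_ u v w).hom).app c ≫ (assoc u (v ⊗ w)).hom.app c ≫
          (act.obj u).map ((assoc v w).hom.app c) =
        (assoc (u ⊗ v) w).hom.app c ≫ (assoc u v).hom.app ((act.obj w).obj c)

variable {V C}

/-- A right-closed structure on a `V`-action: each functor `(-) ⊳ c : V ⥤ C`
has a right adjoint `rhom c = C̲(c,-) : C ⥤ V`. -/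
structure RightClosed (A : MonAction V C) where
  rhom : C → C ⥤ V
  adj : ∀ c : C, A.act.flip.obj c ⊣ rhom c

/-- A left-closed structure on a `V`-action: each functor `v ⊳ (-) : C ⥤ C`
has a right adjoint `lhom v = ⟦v,-⟧ : C ⥤ C`. -/
structure LeftClosed (A : MonAction V C) where
  lhom : V → C ⥤ C
  adj : ∀ v : V, A.act.obj v ⊣ lhom v

variable {A : MonAction V C}

/-- Evaluation (counit) `ev_{a,x} : C̲(a,x) ⊳ a ⟶ x` of the right-closed structure. -/
def RightClosed.ev (R : RightClosed A) (a x : C) :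
    (A.act.obj ((R.rhom a).obj x)).obj a ⟶ x :=
  (R.adj a).counit.app x

/-- Evaluation (counit) `ev_{v,x} : v ⊳ ⟦v,x⟧ ⟶ x` of the left-closed structure. -/
def LeftClosed.ev (L : LeftClosed A) (v : V) (x : C) :
    (A.act.obj v).obj ((L.lhom v).obj x) ⟶ x :=
  (L.adj v).counit.app x

/-- Contravariant functorial action `C̲(f,x) : C̲(b,x) ⟶ C̲(a,x)` of the right-homs. -/
def RightClosed.rmap (R : RightClosed A) {a b : C} (f : a ⟶ b) (x : C) :
    (R.rhom b).obj x ⟶ (R.rhom a).obj x :=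
  ((R.adj a).homEquiv _ x) ((A.act.obj ((R.rhom b).obj x)).map f ≫ R.ev b x)

/-- Contravariant functorial action `⟦h,x⟧ : ⟦w,x⟧ ⟶ ⟦v,x⟧` of the left-homs. -/
def LeftClosed.lmap (L : LeftClosed A) {v w : V} (h : v ⟶ w) (x : C) :
    (L.lhom w).obj x ⟶ (L.lhom v).obj x :=
  ((L.adj v).homEquiv _ x) ((A.act.map h).app ((L.lhom w).obj x) ≫ L.ev w x)

variable (A) in
/-- A strong endofunctor on a `V`-action. -/
structure StrongEndo where
  F : C ⥤ C
  str : ∀ v : V, F ⋙ A.act.obj v ⟶ A.act.obj v ⋙ F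
  str_natural :
    ∀ {v w : V} (h : v ⟶ w) (c : C),
      (A.act.map h).app (F.obj c) ≫ (str w).app c =
        (str v).app c ≫ F.map ((A.act.map h).app c)
  str_lam :
    ∀ c : C,
      (str (𝟙_ V)).app c ≫ F.map (A.lam.hom.app c) = A.lam.hom.app (F.obj c)
  str_assoc :
    ∀ (u v : V) (c : C),
      (str (u ⊗ v)).app c ≫ F.map ((A.assoc u v).hom.app c) =
        (A.assoc u v).hom.app (F.obj c) ≫ (A.act.obj u).map ((str v).app c) ≫
          (str u).app ((A.act.obj v).obj c)

/-- Strong natural transformations between strong endofunctors. -/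
def IsStrongHom (F G : StrongEndo A) (τ : F.F ⟶ G.F) : Prop :=
  ∀ (v : V) (c : C),
    (A.act.obj v).map (τ.app c) ≫ (G.str v).app c =
      (F.str v).app c ≫ τ.app ((A.act.obj v).obj c)

variable (A) in
/-- A strong monad on a `V`-action: a strong endofunctor with a compatible
monad structure. -/
structure StrongMonad extends StrongEndo A where
  unit : 𝟭 C ⟶ F
  mul : F ⋙ F ⟶ F
  left_unit : ∀ c : C, unit.app (F.obj c) ≫ mul.app c = 𝟙 (F.obj c)
  right_unit : ∀ c : C, F.map (unit.app c) ≫ mul.app c = 𝟙 (F.obj c)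
  mul_assoc' : ∀ c : C, F.map (mul.app c) ≫ mul.app c = mul.app (F.obj c) ≫ mul.app c
  unit_str :
    ∀ (v : V) (c : C),
      (A.act.obj v).map (unit.app c) ≫ (str v).app c = unit.app ((A.act.obj v).obj c)
  mul_str :
    ∀ (v : V) (c : C),
      (str v).app (F.obj c) ≫ F.map ((str v).app c) ≫ mul.app ((A.act.obj v).obj c) =
        (A.act.obj v).map (mul.app c) ≫ (str v).app c

/-- The interpretation map `ι(s)_a : C̲(a,X) ⊳ T a ⟶ X` determined by a strength `σ`
and a `T`-algebra `s : T X ⟶ X`. -/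
def interpMap (R : RightClosed A) (T : C ⥤ C)
    (σ : ∀ v : V, T ⋙ A.act.obj v ⟶ A.act.obj v ⋙ T)
    {X : C} (s : T.obj X ⟶ X) (a : C) :
    (A.act.obj ((R.rhom a).obj X)).obj (T.obj a) ⟶ X :=
  (σ ((R.rhom a).obj X)).app a ≫ T.map (R.ev a X) ≫ s

/-- The interpretation `⟦t⟧_{(X,s)} : C̲(a,X) ⊳ c ⟶ X` of a Kleisli map `t : c ⟶ T a`. -/
def interp (R : RightClosed A) (T : C ⥤ C)
    (σ : ∀ v : V, T ⋙ A.act.obj v ⟶ A.act.obj v ⋙ T)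
    {X : C} (s : T.obj X ⟶ X) {c a : C} (t : c ⟶ T.obj a) :
    (A.act.obj ((R.rhom a).obj X)).obj c ⟶ X :=
  (A.act.obj ((R.rhom a).obj X)).map t ≫ interpMap R T σ s a

/-- Satisfaction of an equation `u ≡ v : c ⟶ T a` by an algebra `(X,s)`. -/
def Satisfies (R : RightClosed A) (T : C ⥤ C)
    (σ : ∀ v : V, T ⋙ A.act.obj v ⟶ A.act.obj v ⋙ T)
    {X : C} (s : T.obj X ⟶ X) {c a : C} (u v : c ⟶ T.obj a) : Prop :=
  interp R T σ s u = interp R T σ s v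

/-- A `T`-equation: a parallel pair of Kleisli maps. -/
structure TEq (T : C ⥤ C) where
  coar : C
  ar : C
  lhs : coar ⟶ T.obj ar
  rhs : coar ⟶ T.obj ar

variable (A) in
/-- A Monadic Equational System: a biclosed `V`-action together with a strong
monad and a set of equations. -/
structure MES where
  R : RightClosed A
  L : LeftClosed A
  T : StrongMonad A
  E : Set (TEq T.F)

/-- Eilenberg–Moore algebra laws for a strong monad. -/
def IsEMAlgebra (M : StrongMonad A) {X : C} (s : M.F.obj X ⟶ X) : Prop :=
  M.unit.app X ≫ s = 𝟙 X ∧ M.mul.app X ≫ s = M.F.map s ≫ s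

/-- An `S`-algebra: an Eilenberg–Moore algebra satisfying all the equations. -/
def IsSAlgebra (S : MES A) {X : C} (s : S.T.F.obj X ⟶ X) : Prop :=
  IsEMAlgebra S.T s ∧ ∀ e ∈ S.E, Satisfies S.R S.T.F S.T.str s e.lhs e.rhs

/-- Free `S`-algebras: a left adjoint (described by its universal property)
to the forgetful functor from `S`-algebras. -/
structure FreeAlgebras (S : MES A) where
  TS : C → C
  τ : ∀ X : C, S.T.F.obj (TS X) ⟶ TS X
  unit : ∀ X : C, X ⟶ TS X
  isAlg : ∀ X : C, IsSAlgebra S (τ X)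
  extend : ∀ (X : C) {Y : C} (t : S.T.F.obj Y ⟶ Y), IsSAlgebra S t →
    ∀ f : X ⟶ Y, ∃! g : TS X ⟶ Y, S.T.F.map g ≫ t = τ X ≫ g ∧ unit X ≫ g = f

/-- The lifted algebra `s_v : T ⟦v,X⟧ ⟶ ⟦v,X⟧` on a left-hom. -/
def liftAlg (L : LeftClosed A) (T : C ⥤ C)
    (σ : ∀ v : V, T ⋙ A.act.obj v ⟶ A.act.obj v ⋙ T)
    {X : C} (s : T.obj X ⟶ X) (v : V) :
    T.obj ((L.lhom v).obj X) ⟶ (L.lhom v).obj X :=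
  ((L.adj v).homEquiv _ X)
    ((σ v).app ((L.lhom v).obj X) ≫ T.map (L.ev v X) ≫ s)

/-- The object part `K_X(a) = ⟦C̲(a,X),X⟧` of the double-dualization construction. -/
def Kobj (R : RightClosed A) (L : LeftClosed A) (X a : C) : C :=
  (L.lhom ((R.rhom a).obj X)).obj X

/-- The morphism part of the double-dualization construction. -/
def Kmap (R : RightClosed A) (L : LeftClosed A) (X : C) {a b : C} (f : a ⟶ b) :
    Kobj R L X a ⟶ Kobj R L X b :=
  L.lmap (R.rmap f X) X

/-- The unit `a ⟶ K_X a` of the double-dualization monad: the transpose of the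
evaluation `ev_{a,X}`. -/
def ddUnit (R : RightClosed A) (L : LeftClosed A) (X a : C) : a ⟶ Kobj R L X a :=
  ((L.adj ((R.rhom a).obj X)).homEquiv a X) (R.ev a X)

/-- The map `δ_v : v ⟶ C̲(⟦v,X⟧,X)`: the transpose of the evaluation `ev_{v,X}`. -/
def dd (R : RightClosed A) (L : LeftClosed A) (X : C) (v : V) :
    v ⟶ (R.rhom ((L.lhom v).obj X)).obj X :=
  ((R.adj ((L.lhom v).obj X)).homEquiv v X) (L.ev v X)

/-- The multiplication `K_X (K_X a) ⟶ K_X a` of the double-dualization monad,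
namely `⟦δ_{C̲(a,X)},X⟧`. -/
def ddMult (R : RightClosed A) (L : LeftClosed A) (X a : C) :
    Kobj R L X (Kobj R L X a) ⟶ Kobj R L X a :=
  L.lmap (dd R L X ((R.rhom a).obj X)) X

/-- The map `C̲(v ⊳ a, X) ⊗ v ⟶ C̲(a,X)`, transpose of `ev ∘ assoc`. -/
def hatg (R : RightClosed A) (X : C) (v : V) (a : C) :
    ((R.rhom ((A.act.obj v).obj a)).obj X) ⊗ v ⟶ (R.rhom a).obj X :=
  ((R.adj a).homEquiv _ X)
    ((A.assoc ((R.rhom ((A.act.obj v).obj a)).obj X) v).hom.app a ≫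
      R.ev ((A.act.obj v).obj a) X)

/-- The clone strength `v ⊳ ⟦C̲(a,X),Y⟧ ⟶ ⟦C̲(v ⊳ a,X),Y⟧`. -/
def cloneStr (R : RightClosed A) (L : LeftClosed A) (X Y : C) (v : V) (a : C) :
    (A.act.obj v).obj ((L.lhom ((R.rhom a).obj X)).obj Y) ⟶
      (L.lhom ((R.rhom ((A.act.obj v).obj a)).obj X)).obj Y :=
  ((L.adj ((R.rhom ((A.act.obj v).obj a)).obj X)).homEquiv _ Y)
    ((A.assoc ((R.rhom ((A.act.obj v).obj a)).obj X) v).inv.app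
        ((L.lhom ((R.rhom a).obj X)).obj Y) ≫
      (A.act.map (hatg R X v a)).app ((L.lhom ((R.rhom a).obj X)).obj Y) ≫
      L.ev ((R.rhom a).obj X) Y)

/-- The counit `ε_X : K_X X ⟶ X` of the clone adjunction at `X`. -/
def cleval (R : RightClosed A) (L : LeftClosed A) (X : C) : Kobj R L X X ⟶ X :=
  L.lmap (((R.adj X).homEquiv (𝟙_ V) X) (A.lam.hom.app X)) X ≫
    A.lam.inv.app ((L.lhom (𝟙_ V)).obj X) ≫ L.ev (𝟙_ V) X

/-- The transpose `m(s)_a : T a ⟶ K_X a` of the interpretation map `ι(s)_a`. -/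
def mOf (R : RightClosed A) (L : LeftClosed A) (T : C ⥤ C)
    (σ : ∀ v : V, T ⋙ A.act.obj v ⟶ A.act.obj v ⋙ T)
    {X : C} (s : T.obj X ⟶ X) (a : C) :
    T.obj a ⟶ Kobj R L X a :=
  ((L.adj ((R.rhom a).obj X)).homEquiv (T.obj a) X) (interpMap R T σ s a)

/-- The identity strength on the identity functor. -/
def idStr (A : MonAction V C) (v : V) : 𝟭 C ⋙ A.act.obj v ⟶ A.act.obj v ⋙ 𝟭 C :=
  { app := fun c => 𝟙 ((A.act.obj v).obj c) }

/-- The unit of the clone monad: the clone transpose of the identity on `X`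
(computed through the identity strong functor). -/
def cloneUnit (R : RightClosed A) (L : LeftClosed A) (X a : C) : a ⟶ Kobj R L X a :=
  mOf R L (𝟭 C) (idStr A) (𝟙 X) a

/-- The multiplication of the clone monad: the clone transpose of
`ε_X ∘ K_X ε_X : K_X K_X X ⟶ X` computed through the composite `K_X ∘ K_X`
with its composite (clone) strength. -/
def cloneMult (R : RightClosed A) (L : LeftClosed A) (X a : C) :
    Kobj R L X (Kobj R L X a) ⟶ Kobj R L X a :=
  ((L.adj ((R.rhom a).obj X)).homEquiv _ X)
    (cloneStr R L X X ((R.rhom a).obj X) (Kobj R L X a) ≫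
      Kmap R L X (cloneStr R L X X ((R.rhom a).obj X) a) ≫
      Kmap R L X (Kmap R L X (R.ev a X)) ≫
      Kmap R L X (cleval R L X) ≫ cleval R L X)

end MonEq

/-! For `v : V`, the left-hom `⟦v, -⟧` lifts to `S`-algebras: the structure map on `⟦v, X⟧` is
the transpose of `v ⊳ T ⟦v, X⟧ ⟶ T (v ⊳ ⟦v, X⟧) ⟶ T X ⟶ X`, and it satisfies every equation that
`X` satisfies because its interpretation maps factor through those of `X`. Hence the maps
`v ⊳ T_S X ⟶ Y` into an `S`-algebra that commute with the algebra structures through the strength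
of `T` are the transposes of homomorphisms `T_S X ⟶ ⟦v, Y⟧`, and so are determined by their
restriction along `v ⊳ η^S`. The strength `φ^S_{v,X}` is the one restricting to `η^S_{v ⊳ X}`, and
each law of a strong monad equates two such maps that agree on `v ⊳ η^S`. -/

namespace MonEq

section

variable {V : Type u₁} [Category.{v₁} V] [MonoidalCategory V]
variable {C : Type u₂} [Category.{v₂} C]
variable {A : MonAction V C}

namespace LeftClosed

variable (L : LeftClosed A) (v : V) {Z Z' X : C}

def curry (f : (A.act.obj v).obj Z ⟶ X) : Z ⟶ (L.lhom v).obj X :=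
  (L.adj v).homEquiv Z X f

def uncurry (g : Z ⟶ (L.lhom v).obj X) : (A.act.obj v).obj Z ⟶ X :=
  (A.act.obj v).map g ≫ L.ev v X

@[simp]
lemma uncurry_curry (f : (A.act.obj v).obj Z ⟶ X) : L.uncurry v (L.curry v f) = f :=
  ((L.adj v).homEquiv Z X).symm_apply_apply f

@[simp]
lemma curry_uncurry (g : Z ⟶ (L.lhom v).obj X) : L.curry v (L.uncurry v g) = g :=
  ((L.adj v).homEquiv Z X).apply_symm_apply g

lemma curry_injective : Function.Injective (L.curry v : ((A.act.obj v).obj Z ⟶ X) → _) :=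
  ((L.adj v).homEquiv Z X).injective

lemma curry_natural_left (f : Z' ⟶ Z) (g : (A.act.obj v).obj Z ⟶ X) :
    L.curry v ((A.act.obj v).map f ≫ g) = f ≫ L.curry v g :=
  (L.adj v).homEquiv_naturality_left f g

lemma curry_ev : L.curry v (L.ev v X) = 𝟙 _ := by
  rw [← L.curry_uncurry v (𝟙 _)]
  simp [uncurry]

end LeftClosed

section AlgebraMaps

def IsAlgHom (T : C ⥤ C) {X Y : C} (s : T.obj X ⟶ X) (t : T.obj Y ⟶ Y) (g : X ⟶ Y) : Prop :=
  T.map g ≫ t = s ≫ g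

lemma IsAlgHom.comp {T : C ⥤ C} {X Y Z : C} {s : T.obj X ⟶ X} {t : T.obj Y ⟶ Y}
    {r : T.obj Z ⟶ Z} {g : X ⟶ Y} {h : Y ⟶ Z} (hg : IsAlgHom T s t g)
    (hh : IsAlgHom T t r h) : IsAlgHom T s r (g ≫ h) := by
  rw [IsAlgHom, Functor.map_comp, Category.assoc, hh, reassoc_of% hg]

/-- `p : v ⊳ P ⟶ Q` is a homomorphism `(P, s) ⟶ (Q, t)` relative to the strength of `M`;
these are the transposes of the homomorphisms `P ⟶ ⟦v, Q⟧` (`isParamHom_iff_isAlgHom_curry`). -/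
def IsParamHom (M : StrongMonad A) (v : V) {P Q : C} (s : M.F.obj P ⟶ P) (t : M.F.obj Q ⟶ Q)
    (p : (A.act.obj v).obj P ⟶ Q) : Prop :=
  (A.act.obj v).map s ≫ p = (M.str v).app P ≫ M.F.map p ≫ t

variable {M : StrongMonad A} {P Q R : C} {s : M.F.obj P ⟶ P} {t : M.F.obj Q ⟶ Q}
  {r : M.F.obj R ⟶ R}

lemma IsParamHom.comp_algHom {v : V} {p : (A.act.obj v).obj P ⟶ Q} {h : Q ⟶ R}
    (hp : IsParamHom M v s t p) (hh : IsAlgHom M.F t r h) : IsParamHom M v s r (p ≫ h) := by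
  unfold IsParamHom at *
  unfold IsAlgHom at hh
  rw [reassoc_of% hp, Functor.map_comp, Category.assoc, hh]

lemma IsParamHom.map_algHom_comp {v : V} {g : R ⟶ P} {p : (A.act.obj v).obj P ⟶ Q}
    (hg : IsAlgHom M.F r s g) (hp : IsParamHom M v s t p) :
    IsParamHom M v r t ((A.act.obj v).map g ≫ p) := by
  unfold IsParamHom at *
  unfold IsAlgHom at hg
  have hstr := (M.str v).naturality g
  dsimp at hstr
  rw [← Functor.map_comp_assoc, ← hg, Functor.map_comp_assoc, hp,
    reassoc_of% hstr, Functor.map_comp, Category.assoc]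

lemma IsParamHom.actMap_comp {v w : V} (h : v ⟶ w) {p : (A.act.obj w).obj P ⟶ Q}
    (hp : IsParamHom M w s t p) : IsParamHom M v s t ((A.act.map h).app P ≫ p) := by
  unfold IsParamHom at *
  rw [(A.act.map h).naturality_assoc s, hp,
    reassoc_of% (M.str_natural h P), Functor.map_comp, Category.assoc]

lemma IsParamHom.assoc_comp {u v : V} {p : (A.act.obj v).obj P ⟶ Q}
    {q : (A.act.obj u).obj Q ⟶ R} (hp : IsParamHom M v s t p) (hq : IsParamHom M u t r q) :
    IsParamHom M (u ⊗ v) s r ((A.assoc u v).hom.app P ≫ (A.act.obj u).map p ≫ q) := by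
  unfold IsParamHom at *
  have hα := (A.assoc u v).hom.naturality s
  have hstr := (M.str u).naturality p
  dsimp at hα hstr
  simp only [Functor.map_comp, Category.assoc]
  rw [reassoc_of% (M.str_assoc u v P), reassoc_of% hα, ← Functor.map_comp_assoc, hp,
    Functor.map_comp_assoc, Functor.map_comp_assoc, hq, reassoc_of% hstr]

lemma isParamHom_lam_hom : IsParamHom M (𝟙_ V) s s (A.lam.hom.app P) := by
  rw [IsParamHom, A.lam.hom.naturality s, reassoc_of% (M.str_lam P)]
  rfl

end AlgebraMaps

section LiftedAlgebra

def lhomCompose (R : RightClosed A) (L : LeftClosed A) (v : V) (X a : C) :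
    v ⊗ (R.rhom a).obj ((L.lhom v).obj X) ⟶ (R.rhom a).obj X :=
  ((R.adj a).homEquiv _ X)
    ((A.assoc v ((R.rhom a).obj ((L.lhom v).obj X))).hom.app a ≫
      (A.act.obj v).map (R.ev a ((L.lhom v).obj X)) ≫ L.ev v X)

variable (R : RightClosed A) (L : LeftClosed A) (M : StrongMonad A) (v : V) {X : C}

lemma liftAlg_eq_curry (s : M.F.obj X ⟶ X) :
    liftAlg L M.F M.str s v =
      L.curry v ((M.str v).app ((L.lhom v).obj X) ≫ M.F.map (L.ev v X) ≫ s) :=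
  rfl

lemma map_comp_liftAlg (s : M.F.obj X ⟶ X) {Z : C} (g : Z ⟶ (L.lhom v).obj X) :
    M.F.map g ≫ liftAlg L M.F M.str s v =
      L.curry v ((M.str v).app Z ≫ M.F.map (L.uncurry v g) ≫ s) := by
  have hstr := (M.str v).naturality g
  dsimp at hstr
  rw [liftAlg_eq_curry, ← L.curry_natural_left, reassoc_of% hstr, LeftClosed.uncurry,
    M.F.map_comp_assoc]

lemma isParamHom_iff_isAlgHom_curry {P Q : C} (s : M.F.obj P ⟶ P) (t : M.F.obj Q ⟶ Q)
    (p : (A.act.obj v).obj P ⟶ Q) :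
    IsParamHom M v s t p ↔ IsAlgHom M.F s (liftAlg L M.F M.str t v) (L.curry v p) := by
  rw [IsAlgHom, map_comp_liftAlg, ← L.curry_natural_left, (L.curry_injective v).eq_iff,
    LeftClosed.uncurry_curry, IsParamHom, eq_comm]

lemma IsEMAlgebra.liftAlg {s : M.F.obj X ⟶ X} (hs : IsEMAlgebra M s) :
    IsEMAlgebra M (liftAlg L M.F M.str s v) := by
  obtain ⟨hunit, hmul⟩ := hs
  constructor
  · have hη := M.unit.naturality (L.ev v X)
    dsimp at hη
    rw [liftAlg_eq_curry, ← L.curry_natural_left, reassoc_of% (M.unit_str v ((L.lhom v).obj X)),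
      ← reassoc_of% hη, hunit, Category.comp_id, L.curry_ev]
  · have hμ := M.mul.naturality (L.ev v X)
    dsimp at hμ
    rw [map_comp_liftAlg, liftAlg_eq_curry, ← L.curry_natural_left,
      ← reassoc_of% (M.mul_str v ((L.lhom v).obj X)), LeftClosed.uncurry_curry]
    simp only [Functor.map_comp, Category.assoc]
    rw [← reassoc_of% hμ, hmul]

lemma interp_liftAlg (s : M.F.obj X ⟶ X) {c a : C} (t : c ⟶ M.F.obj a) :
    interp R M.F M.str (liftAlg L M.F M.str s v) t =
      L.curry v ((A.assoc v ((R.rhom a).obj ((L.lhom v).obj X))).inv.app c ≫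
        (A.act.map (lhomCompose R L v X a)).app c ≫ interp R M.F M.str s t) := by
  set w := (R.rhom a).obj ((L.lhom v).obj X)
  set k := lhomCompose R L v X a
  have hstr : (A.act.obj v).map ((M.str w).app a) ≫ (M.str v).app ((A.act.obj w).obj a) =
      (A.assoc v w).inv.app (M.F.obj a) ≫ (M.str (v ⊗ w)).app a ≫
        M.F.map ((A.assoc v w).hom.app a) := by
    rw [M.str_assoc, Iso.inv_hom_id_app_assoc]
  have hk : (A.act.map k).app a ≫ R.ev a X =
      (A.assoc v w).hom.app a ≫ L.uncurry v (R.ev a ((L.lhom v).obj X)) :=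
    ((R.adj a).homEquiv_counit _ _ k).symm.trans (((R.adj a).homEquiv _ X).symm_apply_apply _)
  have hinv := (A.assoc v w).inv.naturality t
  dsimp at hinv
  rw [interp, interpMap, map_comp_liftAlg, ← L.curry_natural_left, ← L.curry_natural_left]
  congr 1
  rw [reassoc_of% hstr, ← M.F.map_comp_assoc, ← hk, M.F.map_comp_assoc,
    ← reassoc_of% (M.str_natural k a), reassoc_of% hinv,
    reassoc_of% ((A.act.map k).naturality t)]
  rfl

lemma Satisfies.liftAlg {s : M.F.obj X ⟶ X} {c a : C} {t t' : c ⟶ M.F.obj a}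
    (h : Satisfies R M.F M.str s t t') :
    Satisfies R M.F M.str (liftAlg L M.F M.str s v) t t' := by
  rw [Satisfies, interp_liftAlg, interp_liftAlg, h]

lemma IsSAlgebra.liftAlg (S : MES A) {s : S.T.F.obj X ⟶ X} (hs : IsSAlgebra S s) (v : V) :
    IsSAlgebra S (liftAlg S.L S.T.F S.T.str s v) :=
  ⟨hs.1.liftAlg S.L S.T v, fun e he => (hs.2 e he).liftAlg S.R S.L S.T v⟩

end LiftedAlgebra

namespace FreeAlgebras

variable {S : MES A} (F : FreeAlgebras S)

lemma hom_ext {X Y : C} {t : S.T.F.obj Y ⟶ Y} (ht : IsSAlgebra S t) {g₁ g₂ : F.TS X ⟶ Y}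
    (h₁ : IsAlgHom S.T.F (F.τ X) t g₁) (h₂ : IsAlgHom S.T.F (F.τ X) t g₂)
    (hunit : F.unit X ≫ g₁ = F.unit X ≫ g₂) : g₁ = g₂ :=
  (F.extend X t ht (F.unit X ≫ g₁)).unique ⟨h₁, rfl⟩ ⟨h₂, hunit.symm⟩

lemma paramHom_ext {v : V} {X Y : C} {t : S.T.F.obj Y ⟶ Y} (ht : IsSAlgebra S t)
    {p q : (A.act.obj v).obj (F.TS X) ⟶ Y}
    (hp : IsParamHom S.T v (F.τ X) t p) (hq : IsParamHom S.T v (F.τ X) t q)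
    (hunit : (A.act.obj v).map (F.unit X) ≫ p = (A.act.obj v).map (F.unit X) ≫ q) : p = q := by
  rw [isParamHom_iff_isAlgHom_curry S.L] at hp hq
  refine S.L.curry_injective v (F.hom_ext (ht.liftAlg S v) hp hq ?_)
  rw [← S.L.curry_natural_left, ← S.L.curry_natural_left, hunit]

lemma exists_paramHom (v : V) (X : C) {Y : C} {t : S.T.F.obj Y ⟶ Y} (ht : IsSAlgebra S t)
    (f : (A.act.obj v).obj X ⟶ Y) :
    ∃ p : (A.act.obj v).obj (F.TS X) ⟶ Y,
      IsParamHom S.T v (F.τ X) t p ∧ (A.act.obj v).map (F.unit X) ≫ p = f := by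
  obtain ⟨g, ⟨hg, hunit⟩, -⟩ := F.extend X _ (ht.liftAlg S v) (S.L.curry v f)
  refine ⟨S.L.uncurry v g, ?_, S.L.curry_injective v ?_⟩
  · rwa [isParamHom_iff_isAlgHom_curry S.L, S.L.curry_uncurry]
  · rw [S.L.curry_natural_left, S.L.curry_uncurry, hunit]

lemma existsUnique_strength :
    ∃! φ : ∀ (v : V) (X : C), (A.act.obj v).obj (F.TS X) ⟶ F.TS ((A.act.obj v).obj X),
      (∀ v X, (A.act.obj v).map (F.unit X) ≫ φ v X = F.unit ((A.act.obj v).obj X)) ∧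
      ∀ v X, IsParamHom S.T v (F.τ X) (F.τ ((A.act.obj v).obj X)) (φ v X) := by
  choose φ hφ hunit using fun v X =>
    F.exists_paramHom v X (F.isAlg ((A.act.obj v).obj X)) (F.unit ((A.act.obj v).obj X))
  refine ⟨φ, ⟨hunit, hφ⟩, fun ψ ⟨hψunit, hψ⟩ => funext₂ fun v X => ?_⟩
  exact F.paramHom_ext (F.isAlg _) (hψ v X) (hφ v X) ((hψunit v X).trans (hunit v X).symm)

end FreeAlgebras

end

theorem free_algebra_monad_is_strong_general
    {V : Type u₁} [Category.{v₁} V] [MonoidalCategory V]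
    {C : Type u₂} [Category.{v₂} C]
    {A : MonAction V C} (S : MES A)
    -- the free `S`-algebra monad `T_S` induced by the adjunction
    (TS : C ⥤ C) (τ : ∀ X : C, S.T.F.obj (TS.obj X) ⟶ TS.obj X)
    (ηS : 𝟭 C ⟶ TS) (μS : TS ⋙ TS ⟶ TS)
    (hAlg : ∀ X : C, IsSAlgebra S (τ X))
    (hτnat : ∀ {X Y : C} (f : X ⟶ Y),
      S.T.F.map (TS.map f) ≫ τ Y = τ X ≫ TS.map f)
    (universal : ∀ (X : C) {Y : C} (t : S.T.F.obj Y ⟶ Y), IsSAlgebra S t →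
      ∀ f : X ⟶ Y, ∃! g : TS.obj X ⟶ Y,
        S.T.F.map g ≫ t = τ X ≫ g ∧ ηS.app X ≫ g = f)
    -- `μ^S_X` is the unique homomorphic extension of the identity on `T_S X`
    (hμ_ext : ∀ X : C, ηS.app (TS.obj X) ≫ μS.app X = 𝟙 (TS.obj X))
    (hμ_hom : ∀ X : C, S.T.F.map (μS.app X) ≫ τ X = τ (TS.obj X) ≫ μS.app X) :
    -- `T_S` carries a unique strength compatible with that of `T`
    (∃! φS : ∀ (v : V) (X : C),
        (A.act.obj v).obj (TS.obj X) ⟶ TS.obj ((A.act.obj v).obj X),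
      (∀ (v : V) (X : C),
        (A.act.obj v).map (ηS.app X) ≫ φS v X = ηS.app ((A.act.obj v).obj X)) ∧
      (∀ (v : V) (X : C),
        (A.act.obj v).map (τ X) ≫ φS v X =
          (S.T.str v).app (TS.obj X) ≫ S.T.F.map (φS v X) ≫ τ ((A.act.obj v).obj X))) ∧
    -- and with it `T_S` is a strong monad
    (∀ φS : ∀ (v : V) (X : C),
        (A.act.obj v).obj (TS.obj X) ⟶ TS.obj ((A.act.obj v).obj X),
      ((∀ (v : V) (X : C),
        (A.act.obj v).map (ηS.app X) ≫ φS v X = ηS.app ((A.act.obj v).obj X)) ∧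
       (∀ (v : V) (X : C),
        (A.act.obj v).map (τ X) ≫ φS v X =
          (S.T.str v).app (TS.obj X) ≫ S.T.F.map (φS v X) ≫ τ ((A.act.obj v).obj X))) →
      (∀ (v : V) {X Y : C} (f : X ⟶ Y),
        (A.act.obj v).map (TS.map f) ≫ φS v Y = φS v X ≫ TS.map ((A.act.obj v).map f)) ∧
      (∀ {v w : V} (h : v ⟶ w) (X : C),
        (A.act.map h).app (TS.obj X) ≫ φS w X = φS v X ≫ TS.map ((A.act.map h).app X)) ∧
      (∀ X : C,
        φS (𝟙_ V) X ≫ TS.map (A.lam.hom.app X) = A.lam.hom.app (TS.obj X)) ∧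
      (∀ (u v : V) (X : C),
        φS (u ⊗ v) X ≫ TS.map ((A.assoc u v).hom.app X) =
          (A.assoc u v).hom.app (TS.obj X) ≫ (A.act.obj u).map (φS v X) ≫
            φS u ((A.act.obj v).obj X)) ∧
      (∀ (v : V) (X : C),
        (A.act.obj v).map (ηS.app X) ≫ φS v X = ηS.app ((A.act.obj v).obj X)) ∧
      (∀ (v : V) (X : C),
        φS v (TS.obj X) ≫ TS.map (φS v X) ≫ μS.app ((A.act.obj v).obj X) =
          (A.act.obj v).map (μS.app X) ≫ φS v X)) := by
  let F : FreeAlgebras S := ⟨TS.obj, τ, ηS.app, hAlg, universal⟩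
  have ηS_natural {X Y : C} (f : X ⟶ Y) : f ≫ ηS.app Y = ηS.app X ≫ TS.map f := ηS.naturality f
  refine ⟨F.existsUnique_strength, fun φ ⟨hη, hτ⟩ => ?_⟩
  replace hτ : ∀ v X, IsParamHom S.T v (τ X) (τ ((A.act.obj v).obj X)) (φ v X) := hτ
  refine ⟨fun v X Y f => ?_, fun {v w} h X => ?_, fun X => ?_, fun u v X => ?_, hη,
    fun v X => ?_⟩
  · refine F.paramHom_ext (hAlg _) ((hτ v Y).map_algHom_comp (hτnat f))
      ((hτ v X).comp_algHom (hτnat _)) ?_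
    rw [← Functor.map_comp_assoc, ← ηS_natural, Functor.map_comp_assoc, hη,
      reassoc_of% (hη v X), ηS_natural]
  · refine F.paramHom_ext (hAlg _) ((hτ w X).actMap_comp h) ((hτ v X).comp_algHom (hτnat _)) ?_
    rw [(A.act.map h).naturality_assoc, hη, reassoc_of% (hη v X), ηS_natural]
  · refine F.paramHom_ext (hAlg _) ((hτ _ X).comp_algHom (hτnat _)) isParamHom_lam_hom ?_
    rw [reassoc_of% (hη _ X), ← ηS_natural]
    exact (A.lam.hom.naturality (ηS.app X)).symm
  · refine F.paramHom_ext (hAlg _) ((hτ _ X).comp_algHom (hτnat _))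
      ((hτ v X).assoc_comp (hτ u _)) ?_
    have hα := (A.assoc u v).hom.naturality (ηS.app X)
    dsimp at hα
    rw [reassoc_of% (hη _ X), ← ηS_natural, reassoc_of% hα, ← Functor.map_comp_assoc, hη, hη]
    rfl
  · refine F.paramHom_ext (hAlg _) ((hτ v _).comp_algHom (IsAlgHom.comp (hτnat _) (hμ_hom _)))
      ((hτ v X).map_algHom_comp (hμ_hom X)) ?_
    rw [reassoc_of% (hη v (TS.obj X)), ← reassoc_of% (ηS_natural (φ v X)), hμ_ext,
      ← Functor.map_comp_assoc, hμ_ext, (A.act.obj v).map_id, Category.id_comp, Category.comp_id]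

/-- **The free `S`-algebra monad of a MES is strong** (Theorem 5.? of the
paper).  For a MES `S = (V,C,T,E)` admitting free algebras, the induced free
`S`-algebra monad `T_S = (T_S, η^S, μ^S)` carries a unique strength `φ^S`
compatible with the strength of `T` via the free-algebra structure maps
`τ X : T (T_S X) ⟶ T_S X`, and with it `T_S` is a strong monad. -/
theorem free_algebra_monad_is_strong
    {V : Type u₁} [Category.{v₁} V] [MonoidalCategory V]
    {C : Type u₂} [Category.{v₂} C]
    {A : MonAction V C} (S : MES A)
    -- the free `S`-algebra monad `T_S` induced by the adjunction
    (TS : C ⥤ C) (τ : ∀ X : C, S.T.F.obj (TS.obj X) ⟶ TS.obj X)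
    (ηS : 𝟭 C ⟶ TS) (μS : TS ⋙ TS ⟶ TS)
    (hAlg : ∀ X : C, IsSAlgebra S (τ X))
    (hτnat : ∀ {X Y : C} (f : X ⟶ Y),
      S.T.F.map (TS.map f) ≫ τ Y = τ X ≫ TS.map f)
    (universal : ∀ (X : C) {Y : C} (t : S.T.F.obj Y ⟶ Y), IsSAlgebra S t →
      ∀ f : X ⟶ Y, ∃! g : TS.obj X ⟶ Y,
        S.T.F.map g ≫ t = τ X ≫ g ∧ ηS.app X ≫ g = f)
    -- `μ^S_X` is the unique homomorphic extension of the identity on `T_S X`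
    (hμ_ext : ∀ X : C, ηS.app (TS.obj X) ≫ μS.app X = 𝟙 (TS.obj X))
    (hμ_hom : ∀ X : C, S.T.F.map (μS.app X) ≫ τ X = τ (TS.obj X) ≫ μS.app X)
    -- monad laws of the induced monad
    (h_right : ∀ X : C, TS.map (ηS.app X) ≫ μS.app X = 𝟙 (TS.obj X))
    (h_assoc : ∀ X : C, TS.map (μS.app X) ≫ μS.app X = μS.app (TS.obj X) ≫ μS.app X) :
    -- `T_S` carries a unique strength compatible with that of `T`
    (∃! φS : ∀ (v : V) (X : C),
        (A.act.obj v).obj (TS.obj X) ⟶ TS.obj ((A.act.obj v).obj X),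
      (∀ (v : V) (X : C),
        (A.act.obj v).map (ηS.app X) ≫ φS v X = ηS.app ((A.act.obj v).obj X)) ∧
      (∀ (v : V) (X : C),
        (A.act.obj v).map (τ X) ≫ φS v X =
          (S.T.str v).app (TS.obj X) ≫ S.T.F.map (φS v X) ≫ τ ((A.act.obj v).obj X))) ∧
    -- and with it `T_S` is a strong monad
    (∀ φS : ∀ (v : V) (X : C),
        (A.act.obj v).obj (TS.obj X) ⟶ TS.obj ((A.act.obj v).obj X),
      ((∀ (v : V) (X : C),
        (A.act.obj v).map (ηS.app X) ≫ φS v X = ηS.app ((A.act.obj v).obj X)) ∧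
       (∀ (v : V) (X : C),
        (A.act.obj v).map (τ X) ≫ φS v X =
          (S.T.str v).app (TS.obj X) ≫ S.T.F.map (φS v X) ≫ τ ((A.act.obj v).obj X))) →
      (∀ (v : V) {X Y : C} (f : X ⟶ Y),
        (A.act.obj v).map (TS.map f) ≫ φS v Y = φS v X ≫ TS.map ((A.act.obj v).map f)) ∧
      (∀ {v w : V} (h : v ⟶ w) (X : C),
        (A.act.map h).app (TS.obj X) ≫ φS w X = φS v X ≫ TS.map ((A.act.map h).app X)) ∧
      (∀ X : C,
        φS (𝟙_ V) X ≫ TS.map (A.lam.hom.app X) = A.lam.hom.app (TS.obj X)) ∧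
      (∀ (u v : V) (X : C),
        φS (u ⊗ v) X ≫ TS.map ((A.assoc u v).hom.app X) =
          (A.assoc u v).hom.app (TS.obj X) ≫ (A.act.obj u).map (φS v X) ≫
            φS u ((A.act.obj v).obj X)) ∧
      (∀ (v : V) (X : C),
        (A.act.obj v).map (ηS.app X) ≫ φS v X = ηS.app ((A.act.obj v).obj X)) ∧
      (∀ (v : V) (X : C),
        φS v (TS.obj X) ≫ TS.map (φS v X) ≫ μS.app ((A.act.obj v).obj X) =
          (A.act.obj v).map (μS.app X) ≫ φS v X)) :=
  free_algebra_monad_is_strong_general S TS τ ηS μS hAlg hτnat universal hμ_ext hμ_hom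

end MonEq
end

section
/- For a Monadic Equational System S = (V, C, T, E) admitting free algebras, the quotient monad morphism q^S : T → T_S is a strong monad morphism; that is, for all V ∈ V and X ∈ C, q^S_{V⊳X} ∘ φ_{V,X} = φ^S_{V,X} ∘ (V ⊳ q^S_X) : V ⊳ TX → T_S(V ⊳ X), where φ and φ^S are the strengths of T and of the free S-algebra monad T_S respectively. -/
open CategoryTheory MonoidalCategory Limits

universe w v₁ v₂ v₃ u₁ u₂ u₃

/-!
Both `q_{v ⊳ X} ∘ φ_{v,X}` and `φ^S_{v,X} ∘ (v ⊳ q_X)` are maps `f : v ⊳ T X ⟶ T_S (v ⊳ X)`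
satisfying `f ∘ (v ⊳ μ_X) = τ^S ∘ T f ∘ φ_{v,T X}`, because `q` is a homomorphism of
`T`-algebras and `φ` (resp. `φ^S`) is compatible with `μ` (resp. `τ^S`). By the right unit law and
naturality of `φ`, such an `f` equals `τ^S ∘ T (f ∘ (v ⊳ η_X)) ∘ φ_{v,X}`, so it is determined by
`f ∘ (v ⊳ η_X)`; and both restrictions equal `η^S_{v ⊳ X}`.
-/

namespace MonEq

variable {V : Type u₁} [Category.{v₁} V] [MonoidalCategory V] {C : Type u₂} [Category.{v₂} C]
  {A : MonAction V C}

/-- `f : v ⊳ Z ⟶ Y` is a homomorphism from `(Z, s)` to `(Y, t)` mediated by the strength. -/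
def StrongEndo.IsActHom (F : StrongEndo A) (v : V) {Z Y : C} (s : F.F.obj Z ⟶ Z)
    (t : F.F.obj Y ⟶ Y) (f : (A.act.obj v).obj Z ⟶ Y) : Prop :=
  (A.act.obj v).map s ≫ f = (F.str v).app Z ≫ F.F.map f ≫ t

theorem StrongEndo.IsActHom.act_map_comp {F : StrongEndo A} {v : V} {Z Z' Y : C}
    {s : F.F.obj Z ⟶ Z} {s' : F.F.obj Z' ⟶ Z'} {t : F.F.obj Y ⟶ Y}
    {φ : (A.act.obj v).obj Z ⟶ Y} (hφ : F.IsActHom v s t φ)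
    {q : Z' ⟶ Z} (hq : F.F.map q ≫ s = s' ≫ q) :
    F.IsActHom v s' t ((A.act.obj v).map q ≫ φ) := by
  have nat : (A.act.obj v).map (F.F.map q) ≫ (F.str v).app Z =
      (F.str v).app Z' ≫ F.F.map ((A.act.obj v).map q) :=
    (F.str v).naturality q
  calc (A.act.obj v).map s' ≫ (A.act.obj v).map q ≫ φ
      = (A.act.obj v).map (F.F.map q) ≫ (A.act.obj v).map s ≫ φ := by
        rw [← Functor.map_comp_assoc, ← hq, Functor.map_comp_assoc]
    _ = (F.str v).app Z' ≫ F.F.map ((A.act.obj v).map q ≫ φ) ≫ t := by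
        rw [hφ, reassoc_of% nat, Functor.map_comp_assoc]

namespace StrongMonad

variable {M : StrongMonad A} {v : V} {X Y : C} {t : M.F.obj Y ⟶ Y}

theorem isActHom_str_comp {q : M.F.obj ((A.act.obj v).obj X) ⟶ Y}
    (hq : M.F.map q ≫ t = M.mul.app _ ≫ q) :
    M.IsActHom v (M.mul.app X) t ((M.str v).app X ≫ q) := by
  rw [StrongEndo.IsActHom, Functor.map_comp, ← Category.assoc, ← M.mul_str v X]
  simp only [Category.assoc, hq]

end StrongMonad

namespace StrongEndo.IsActHom

variable {M : StrongMonad A} {v : V} {X Y : C} {t : M.F.obj Y ⟶ Y}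

theorem eq_str_comp {f : (A.act.obj v).obj (M.F.obj X) ⟶ Y}
    (hf : M.IsActHom v (M.mul.app X) t f) :
    f = (M.str v).app X ≫ M.F.map ((A.act.obj v).map (M.unit.app X) ≫ f) ≫ t := by
  have nat : (A.act.obj v).map (M.F.map (M.unit.app X)) ≫ (M.str v).app (M.F.obj X) =
      (M.str v).app X ≫ M.F.map ((A.act.obj v).map (M.unit.app X)) :=
    (M.str v).naturality (M.unit.app X)
  calc f = (A.act.obj v).map (M.F.map (M.unit.app X) ≫ M.mul.app X) ≫ f := by
        rw [M.right_unit]; simp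
    _ = _ := by
        rw [Functor.map_comp_assoc, hf, reassoc_of% nat, Functor.map_comp_assoc]

theorem ext {f g : (A.act.obj v).obj (M.F.obj X) ⟶ Y}
    (hf : M.IsActHom v (M.mul.app X) t f) (hg : M.IsActHom v (M.mul.app X) t g)
    (h : (A.act.obj v).map (M.unit.app X) ≫ f = (A.act.obj v).map (M.unit.app X) ≫ g) :
    f = g := by
  rw [hf.eq_str_comp, hg.eq_str_comp, h]

end StrongEndo.IsActHom

/-- **The quotient monad morphism is strong** (Theorem 7.? of the paper).
For a MES `S` admitting free algebras, the quotient maps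
`q X : T X ⟶ T_S X` (the unique homomorphic extensions
`(T X, μ_X) ⟶ (T_S X, τ X)` of `η^S_X`) commute with the strengths of `T`
and of the free `S`-algebra monad `T_S` (the latter being characterized by
compatibility with the free-algebra structure maps):
`q (v ⊳ X) ∘ φ_{v,X} = φ^S_{v,X} ∘ (v ⊳ q X)`. -/
theorem quotient_monad_morphism_is_strong
    {V : Type u₁} [Category.{v₁} V] [MonoidalCategory V]
    {C : Type u₂} [Category.{v₂} C]
    {A : MonAction V C} (S : MES A) (FA : FreeAlgebras S)
    -- the quotient maps
    (q : ∀ X : C, S.T.F.obj X ⟶ FA.TS X)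
    (hq_hom : ∀ X : C, S.T.F.map (q X) ≫ FA.τ X = S.T.mul.app X ≫ q X)
    (hq_unit : ∀ X : C, S.T.unit.app X ≫ q X = FA.unit X)
    -- the canonical strength of the free `S`-algebra monad
    (φS : ∀ (v : V) (X : C),
      (A.act.obj v).obj (FA.TS X) ⟶ FA.TS ((A.act.obj v).obj X))
    (hφS_unit : ∀ (v : V) (X : C),
      (A.act.obj v).map (FA.unit X) ≫ φS v X = FA.unit ((A.act.obj v).obj X))
    (hφS_hom : ∀ (v : V) (X : C),
      (A.act.obj v).map (FA.τ X) ≫ φS v X =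
        (S.T.str v).app (FA.TS X) ≫ S.T.F.map (φS v X) ≫ FA.τ ((A.act.obj v).obj X)) :
    ∀ (v : V) (X : C),
      (S.T.str v).app X ≫ q ((A.act.obj v).obj X) =
        (A.act.obj v).map (q X) ≫ φS v X := by
  intro v X
  refine StrongEndo.IsActHom.ext (StrongMonad.isActHom_str_comp (hq_hom _))
    (.act_map_comp (hφS_hom v X) (hq_hom X)) ?_
  rw [← Category.assoc, S.T.unit_str, hq_unit, ← hφS_unit, ← hq_unit X, Functor.map_comp_assoc]

end MonEq
end

section
/- For a Monadic Equational System S admitting free algebras, the quotient map q^S_X : TX → T_S X factors as ι(τ^S_X) ∘ (n_X ⊳ TX) ∘ (λ_{TX})⁻¹, where ι(τ^S_X) : C̲(X, T_S X) ⊳ TX → T_S X is the interpretation map of the free S-algebra structure τ^S_X, and n_X : I → C̲(X, T_S X) is the transpose of η^S_X ∘ λ_X : I ⊳ X → T_S X. -/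
open CategoryTheory MonoidalCategory Limits

universe w v₁ v₂ v₃ u₁ u₂ u₃

namespace MonEq

/-! Evaluating `ι(s)_a` at the name `I ⟶ C̲(a,X)` of a morphism `f : a ⟶ X` gives `T f ≫ s`:
naturality of the strength moves the name inside `T`, where it cancels against the evaluation,
and the unit law of the strength absorbs the remaining unitors. For `s = τ^S_X` and `f = η^S_X`
this is `T η^S_X ≫ τ^S_X`, which equals `q^S_X` since an algebra morphism out of the free
algebra `(T X, μ_X)` is determined by its composite with `η_X`. -/

section

variable {V : Type u₁} [Category.{v₁} V] [MonoidalCategory V]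
  {C : Type u₂} [Category.{v₂} C] {A : MonAction V C}

theorem RightClosed.act_map_homEquiv_comp_ev (R : RightClosed A) {v : V} {a x : C}
    (f : (A.act.obj v).obj a ⟶ x) :
    (A.act.map ((R.adj a).homEquiv v x f)).app a ≫ R.ev a x = f :=
  ((R.adj a).homEquiv_counit _ _ _).symm.trans (Equiv.symm_apply_apply _ f)

theorem StrongEndo.lam_inv_comp_str (F : StrongEndo A) (c : C) :
    A.lam.inv.app (F.F.obj c) ≫ (F.str (𝟙_ V)).app c = F.F.map (A.lam.inv.app c) := by
  rw [← cancel_mono (F.F.map (A.lam.hom.app c)), Category.assoc, F.str_lam, ← F.F.map_comp,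
    Iso.inv_hom_id_app, Iso.inv_hom_id_app, F.F.map_id]
  rfl

theorem interpMap_name (R : RightClosed A) (F : StrongEndo A) {X a : C}
    (s : F.F.obj X ⟶ X) (f : a ⟶ X) :
    A.lam.inv.app (F.F.obj a) ≫
        (A.act.map ((R.adj a).homEquiv (𝟙_ V) X (A.lam.hom.app a ≫ f))).app (F.F.obj a) ≫
          interpMap R F.F F.str s a =
      F.F.map f ≫ s := by
  set n := (R.adj a).homEquiv (𝟙_ V) X (A.lam.hom.app a ≫ f)
  calc A.lam.inv.app (F.F.obj a) ≫ (A.act.map n).app (F.F.obj a) ≫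
          (F.str _).app a ≫ F.F.map (R.ev a X) ≫ s
      = A.lam.inv.app (F.F.obj a) ≫ (F.str (𝟙_ V)).app a ≫
          F.F.map ((A.act.map n).app a ≫ R.ev a X) ≫ s := by
        rw [F.F.map_comp, Category.assoc, ← reassoc_of% (F.str_natural n a)]
    _ = F.F.map (A.lam.inv.app a ≫ A.lam.hom.app a ≫ f) ≫ s := by
        rw [R.act_map_homEquiv_comp_ev, reassoc_of% (F.lam_inv_comp_str a), ← F.F.map_comp_assoc]
    _ = F.F.map f ≫ s := by rw [Iso.inv_hom_id_app_assoc]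

theorem StrongMonad.eq_map_unit_comp_of_map_comp_eq_mul_comp (M : StrongMonad A) {X Y : C}
    {t : M.F.obj Y ⟶ Y} {q : M.F.obj X ⟶ Y} (hq : M.F.map q ≫ t = M.mul.app X ≫ q) :
    q = M.F.map (M.unit.app X ≫ q) ≫ t := by
  rw [M.F.map_comp, Category.assoc, hq, ← Category.assoc, M.right_unit]
  exact (Category.id_comp q).symm

end

/-- **The quotient map as an interpretation** (Proposition 7.? of the paper).
For a MES `S` admitting free algebras, the quotient map `q X : T X ⟶ T_S X`
factors as `ι(τ X) ∘ (n_X ⊳ T X) ∘ λ⁻¹`, where `ι(τ X)` is the interpretation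
map of the free `S`-algebra structure and `n_X : I ⟶ C̲(X, T_S X)` is the
transpose of `η^S_X ∘ λ_X`. -/
theorem quotient_map_factors_through_interpretation
    {V : Type u₁} [Category.{v₁} V] [MonoidalCategory V]
    {C : Type u₂} [Category.{v₂} C]
    {A : MonAction V C} (S : MES A) (FA : FreeAlgebras S)
    (q : ∀ X : C, S.T.F.obj X ⟶ FA.TS X)
    (hq_hom : ∀ X : C, S.T.F.map (q X) ≫ FA.τ X = S.T.mul.app X ≫ q X)
    (hq_unit : ∀ X : C, S.T.unit.app X ≫ q X = FA.unit X)
    (X : C)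
    -- `n_X : I ⟶ C̲(X, T_S X)`, the transpose of `η^S_X ∘ λ_X`
    (n : 𝟙_ V ⟶ (S.R.rhom X).obj (FA.TS X))
    (hn : n = ((S.R.adj X).homEquiv (𝟙_ V) (FA.TS X))
      (A.lam.hom.app X ≫ FA.unit X)) :
    q X = A.lam.inv.app (S.T.F.obj X) ≫ (A.act.map n).app (S.T.F.obj X) ≫
      interpMap S.R S.T.F S.T.str (FA.τ X) X := by
  subst hn
  rw [interpMap_name, ← hq_unit]
  exact S.T.eq_map_unit_comp_of_map_comp_eq_mul_comp (hq_hom X)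

end MonEq
end

section
/- Let T be a strong monad on a left-closed V-action C, and let (X,s) be an algebra for the underlying endofunctor T. Then (X,s) is an Eilenberg–Moore algebra for the monad T if and only if (⟦V,X⟧, s_V) is an Eilenberg–Moore algebra for T for every V ∈ V. -/
open CategoryTheory MonoidalCategory Limits

universe w v₁ v₂ v₃ u₁ u₂ u₃

/-!
Transposing along `v ⊳ (-) ⊣ ⟦v,-⟧` turns the Eilenberg–Moore laws of `s` into those of `s_v`,
because the strength carries `η` and `μ` across `v ⊳ (-)`. Conversely, the transpose `X ⟶ ⟦I,X⟧`
of the unitor is an isomorphism of algebras `(X,s) ≅ (⟦I,X⟧,s_I)`, and the Eilenberg–Moore laws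
are reflected along any monic algebra morphism.
-/

namespace MonEq

section

variable {V : Type u₁} [Category.{v₁} V] [MonoidalCategory V]
variable {C : Type u₂} [Category.{v₂} C] {A : MonAction V C}

namespace LeftClosed

variable (L : LeftClosed A) (v : V)

lemma map_homEquiv_comp_ev {Y X : C} (f : (A.act.obj v).obj Y ⟶ X) :
    (A.act.obj v).map ((L.adj v).homEquiv Y X f) ≫ L.ev v X = f := by
  rw [LeftClosed.ev, ← Adjunction.homEquiv_counit, Equiv.symm_apply_apply]

lemma hom_ext {Y X : C} {g₁ g₂ : Y ⟶ (L.lhom v).obj X}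
    (h : (A.act.obj v).map g₁ ≫ L.ev v X = (A.act.obj v).map g₂ ≫ L.ev v X) : g₁ = g₂ :=
  ((L.adj v).homEquiv Y X).symm.injective <| by
    rw [Adjunction.homEquiv_counit, Adjunction.homEquiv_counit]
    exact h

def lhomUnitIso (X : C) : X ≅ (L.lhom (𝟙_ V)).obj X where
  hom := (L.adj (𝟙_ V)).homEquiv X X (A.lam.hom.app X)
  inv := A.lam.inv.app _ ≫ L.ev (𝟙_ V) X
  hom_inv_id := by
    refine (A.lam.inv.naturality_assoc _ _).trans ?_
    rw [L.map_homEquiv_comp_ev, Iso.inv_hom_id_app]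
    rfl
  inv_hom_id := by
    apply L.hom_ext
    rw [Functor.map_comp, Category.assoc, L.map_homEquiv_comp_ev, A.lam.hom.naturality,
      Functor.id_map, Iso.hom_inv_id_app_assoc, CategoryTheory.Functor.map_id,
      Category.id_comp]

lemma map_lhomUnitIso_hom_comp_ev (X : C) :
    (A.act.obj (𝟙_ V)).map (L.lhomUnitIso X).hom ≫ L.ev (𝟙_ V) X = A.lam.hom.app X :=
  L.map_homEquiv_comp_ev _ _

end LeftClosed

lemma map_liftAlg_comp_ev (L : LeftClosed A) (M : StrongMonad A) {X : C}
    (s : M.F.obj X ⟶ X) (v : V) :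
    (A.act.obj v).map (liftAlg L M.F M.str s v) ≫ L.ev v X =
      (M.str v).app ((L.lhom v).obj X) ≫ M.F.map (L.ev v X) ≫ s :=
  L.map_homEquiv_comp_ev v _

lemma lhomUnitIso_hom_comp_liftAlg (L : LeftClosed A) (M : StrongMonad A) {X : C}
    (s : M.F.obj X ⟶ X) :
    s ≫ (L.lhomUnitIso X).hom = M.F.map (L.lhomUnitIso X).hom ≫ liftAlg L M.F M.str s (𝟙_ V) := by
  apply L.hom_ext
  rw [Functor.map_comp, Functor.map_comp, Category.assoc, Category.assoc,
    L.map_lhomUnitIso_hom_comp_ev, map_liftAlg_comp_ev, A.lam.hom.naturality, Functor.id_map]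
  symm
  refine ((M.str _).naturality_assoc _ _).trans ?_
  rw [Functor.comp_map, ← Functor.map_comp_assoc, L.map_lhomUnitIso_hom_comp_ev, ← Category.assoc,
    M.str_lam]

lemma isEMAlgebra_liftAlg (L : LeftClosed A) {M : StrongMonad A} {X : C}
    {s : M.F.obj X ⟶ X} (hs : IsEMAlgebra M s) (v : V) :
    IsEMAlgebra M (liftAlg L M.F M.str s v) := by
  obtain ⟨hunit, hmul⟩ := hs
  constructor
  · apply L.hom_ext v
    rw [Functor.map_comp, Category.assoc, map_liftAlg_comp_ev, ← Category.assoc, M.unit_str,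
      ← Category.assoc, ← M.unit.naturality]
    simp [hunit]
  · apply L.hom_ext v
    calc (A.act.obj v).map (M.mul.app _ ≫ liftAlg L M.F M.str s v) ≫ L.ev v X
        = (M.str v).app _ ≫ M.F.map ((M.str v).app _) ≫ M.mul.app _ ≫ M.F.map (L.ev v X) ≫ s := by
          rw [Functor.map_comp, Category.assoc, map_liftAlg_comp_ev, ← Category.assoc,
            ← M.mul_str]
          simp only [Category.assoc]
      _ = (M.str v).app _ ≫ M.F.map ((M.str v).app _ ≫ M.F.map (L.ev v X) ≫ s) ≫ s := by
          rw [← M.mul.naturality_assoc, hmul]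
          simp only [Functor.comp_map, Functor.map_comp, Category.assoc]
      _ = (M.str v).app _ ≫
            M.F.map ((A.act.obj v).map (liftAlg L M.F M.str s v) ≫ L.ev v X) ≫ s := by
          rw [map_liftAlg_comp_ev]
      _ = (A.act.obj v).map (M.F.map (liftAlg L M.F M.str s v)) ≫
            (M.str v).app _ ≫ M.F.map (L.ev v X) ≫ s := by
          rw [Functor.map_comp, Category.assoc]
          exact ((M.str v).naturality_assoc _ _).symm
      _ = (A.act.obj v).map (M.F.map (liftAlg L M.F M.str s v) ≫
            liftAlg L M.F M.str s v) ≫ L.ev v X := by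
          rw [Functor.map_comp, Category.assoc, map_liftAlg_comp_ev]

lemma IsEMAlgebra.of_mono {M : StrongMonad A} {X Y : C} {s : M.F.obj X ⟶ X}
    {t : M.F.obj Y ⟶ Y} (j : X ⟶ Y) [Mono j] (hj : s ≫ j = M.F.map j ≫ t)
    (ht : IsEMAlgebra M t) : IsEMAlgebra M s := by
  obtain ⟨hunit, hmul⟩ := ht
  constructor
  · rw [← cancel_mono j, Category.assoc, hj, ← M.unit.naturality_assoc, hunit]
    simp
  · rw [← cancel_mono j]
    calc (M.mul.app X ≫ s) ≫ j = M.F.map (M.F.map j) ≫ M.mul.app Y ≫ t := by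
          rw [Category.assoc, hj, ← M.mul.naturality_assoc, Functor.comp_map]
      _ = (M.F.map s ≫ s) ≫ j := by
          rw [hmul, ← Functor.map_comp_assoc, ← hj, Functor.map_comp_assoc, Category.assoc, hj]

end

/-- **Eilenberg–Moore algebras are closed under left-homs** (Lemma 5.? of the
paper).  For a strong monad `M` on a left-closed `V`-action, an endofunctor
algebra `(X,s)` is an Eilenberg–Moore algebra for `M` if and only if the
lifted algebra `(⟦v,X⟧, s_v)` is an Eilenberg–Moore algebra for every `v ∈ V`. -/
theorem em_algebra_iff_lifted_em_algebras
    {V : Type u₁} [Category.{v₁} V] [MonoidalCategory V]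
    {C : Type u₂} [Category.{v₂} C]
    {A : MonAction V C} (L : LeftClosed A) (M : StrongMonad A)
    {X : C} (s : M.F.obj X ⟶ X) :
    IsEMAlgebra M s ↔ ∀ v : V, IsEMAlgebra M (liftAlg L M.F M.str s v) :=
  ⟨fun hs v => isEMAlgebra_liftAlg L hs v, fun h =>
    (h (𝟙_ V)).of_mono (L.lhomUnitIso X).hom (lhomUnitIso_hom_comp_liftAlg L M s)⟩

end MonEq
end

section
/- Let T be a strong endofunctor on a right-closed V-action C, and let h : (X,s) → (Y,t) be a T-algebra homomorphism whose underlying morphism h : X → Y is a monomorphism in C. Then for every T-equation u,v : C → TA, if (Y,t) satisfies u ≡ v then (X,s) satisfies u ≡ v. -/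
open CategoryTheory MonoidalCategory Limits

universe w v₁ v₂ v₃ u₁ u₂ u₃

namespace MonEq

/-! An algebra homomorphism `h : (X,s) ⟶ (Y,t)` intertwines interpretations:
`⟦w⟧_X ≫ h = (C̲(a,h) ⊳ c) ≫ ⟦w⟧_Y`, by naturality of evaluation and of the strength in its
`V`-argument. Hence `⟦u⟧_Y = ⟦v⟧_Y` forces `⟦u⟧_X ≫ h = ⟦v⟧_X ≫ h`, and `h` is mono. -/

section AlgebraHom

variable {V : Type u₁} [Category.{v₁} V] [MonoidalCategory V]
variable {C : Type u₂} [Category.{v₂} C] {A : MonAction V C}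

theorem RightClosed.ev_naturality (R : RightClosed A) (a : C) {x y : C} (f : x ⟶ y) :
    R.ev a x ≫ f = (A.act.map ((R.rhom a).map f)).app a ≫ R.ev a y :=
  ((R.adj a).counit.naturality f).symm

variable (R : RightClosed A) (T : StrongEndo A) {X Y : C}
  {s : T.F.obj X ⟶ X} {t : T.F.obj Y ⟶ Y} {h : X ⟶ Y}

theorem interpMap_comp_of_algHom (hh : T.F.map h ≫ t = s ≫ h) (a : C) :
    interpMap R T.F T.str s a ≫ h =
      (A.act.map ((R.rhom a).map h)).app (T.F.obj a) ≫ interpMap R T.F T.str t a := by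
  calc interpMap R T.F T.str s a ≫ h
      = (T.str _).app a ≫ T.F.map (R.ev a X ≫ h) ≫ t := by
        simp only [interpMap, Functor.map_comp, Category.assoc, hh]
    _ = (T.str _).app a ≫ T.F.map ((A.act.map ((R.rhom a).map h)).app a) ≫
          T.F.map (R.ev a Y) ≫ t := by
        rw [R.ev_naturality, Functor.map_comp, Category.assoc]
    _ = _ := by
        rw [← reassoc_of% (T.str_natural ((R.rhom a).map h) a), interpMap]

theorem interp_comp_of_algHom (hh : T.F.map h ≫ t = s ≫ h) {c a : C} (w : c ⟶ T.F.obj a) :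
    interp R T.F T.str s w ≫ h =
      (A.act.map ((R.rhom a).map h)).app c ≫ interp R T.F T.str t w := by
  rw [interp, Category.assoc, interpMap_comp_of_algHom R T hh,
    NatTrans.naturality_assoc, interp]

end AlgebraHom

/-- **Satisfaction transfers along monomorphic algebra homomorphisms**
(Corollary 5.? of the paper).  For a strong endofunctor `T` on a right-closed
`V`-action and a `T`-algebra homomorphism `h : (X,s) ⟶ (Y,t)` whose underlying
morphism is a monomorphism, if `(Y,t)` satisfies `u ≡ v` then so does `(X,s)`. -/
theorem satisfaction_along_mono
    {V : Type u₁} [Category.{v₁} V] [MonoidalCategory V]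
    {C : Type u₂} [Category.{v₂} C]
    {A : MonAction V C} (R : RightClosed A) (T : StrongEndo A)
    {X Y : C} (s : T.F.obj X ⟶ X) (t : T.F.obj Y ⟶ Y)
    (h : X ⟶ Y) (hh : T.F.map h ≫ t = s ≫ h) [Mono h]
    {c a : C} (u v : c ⟶ T.F.obj a) :
    Satisfies R T.F T.str t u v → Satisfies R T.F T.str s u v := by
  intro hY
  refine (cancel_mono h).mp ?_
  rw [interp_comp_of_algHom R T hh, interp_comp_of_algHom R T hh, hY]

end MonEq
end
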